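/- arXiv:2307.07284 — 2 statements merged into one kernel-verified Lean document; each statement's English description precedes it below -/
import Mathlib

section
/- For every real α ≥ 0 there exists a deterministic delayed-decision algorithm with reservations for online Vertex Cover whose cost with reservation cost α is at most min{1 + 2α, 2}·τ(G) on every instance (n, G). -/
open SimpleGraph

/-- `S` is a vertex cover of `G`: it contains at least one endpoint of every edge. -/
def IsVC {n : ℕ} (G : SimpleGraph (Fin n)) (S : Finset (Fin n)) : Prop :=
  ∀ ⦃x y : Fin n⦄, G.Adj x y → x ∈ S ∨ y ∈ S

/-- `vcNum G` is the minimum size of a vertex cover of `G`. -/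
noncomputable def vcNum {n : ℕ} (G : SimpleGraph (Fin n)) : ℕ :=
  sInf {k : ℕ | ∃ S : Finset (Fin n), IsVC G S ∧ S.card = k}

/-- A deterministic delayed-decision algorithm with reservations for online
Vertex Cover: besides the irrevocably selected set `S`, the algorithm may reserve
a set `R` of vertices. -/
structure DelayedVCAlgorithmRes where
  /-- the set of irrevocably selected vertices after seeing the first `i` vertices -/
  S : ∀ n : ℕ, SimpleGraph (Fin n) → ℕ → Finset (Fin n)
  /-- the set of reserved vertices after seeing the first `i` vertices -/
  R : ∀ n : ℕ, SimpleGraph (Fin n) → ℕ → Finset (Fin n)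
  memS_lt : ∀ (n : ℕ) (G : SimpleGraph (Fin n)) (i : ℕ) (v : Fin n),
    v ∈ S n G i → (v : ℕ) < i
  memR_lt : ∀ (n : ℕ) (G : SimpleGraph (Fin n)) (i : ℕ) (v : Fin n),
    v ∈ R n G i → (v : ℕ) < i
  /-- determinism/online condition: on instances agreeing on their `i`-th prefix, the
  selected and reserved sets agree -/
  online : ∀ (n m : ℕ) (G : SimpleGraph (Fin n)) (G' : SimpleGraph (Fin m)) (i : ℕ)
      (hn : i ≤ n) (hm : i ≤ m),
      (∀ x y : Fin i, G.Adj (Fin.castLE hn x) (Fin.castLE hn y) ↔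
        G'.Adj (Fin.castLE hm x) (Fin.castLE hm y)) →
      (S n G i).image Fin.val = (S m G' i).image Fin.val ∧
      (R n G i).image Fin.val = (R m G' i).image Fin.val
  irrevocableS : ∀ (n : ℕ) (G : SimpleGraph (Fin n)) (i : ℕ), i < n →
    S n G i ⊆ S n G (i + 1)
  irrevocableR : ∀ (n : ℕ) (G : SimpleGraph (Fin n)) (i : ℕ), i < n →
    R n G i ⊆ R n G (i + 1)
  /-- the subgraph induced on the presented vertices outside `S ∪ R` has no edges -/
  valid : ∀ (n : ℕ) (G : SimpleGraph (Fin n)) (i : ℕ), i ≤ n →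
    ∀ x y : Fin n, (x : ℕ) < i → (y : ℕ) < i →
      x ∉ S n G i ∪ R n G i → y ∉ S n G i ∪ R n G i → ¬ G.Adj x y

/-- The cost of an algorithm with reservations on the instance `(n, G)` with
reservation cost `α`: the irrevocably selected vertices, plus the minimum number of
further vertices needed to complete them to a vertex cover, plus `α` per reserved
vertex. -/
noncomputable def resCost (A : DelayedVCAlgorithmRes) (α : ℝ) (n : ℕ)
    (G : SimpleGraph (Fin n)) : ℝ :=
  ((A.S n G n).card : ℝ) +
    ((sInf {k : ℕ | ∃ T : Finset (Fin n), IsVC G (A.S n G n ∪ T) ∧ T.card = k} : ℕ) : ℝ) +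
    α * ((A.R n G n).card : ℝ)

/-! Greedily match each arriving vertex to its least earlier unmatched neighbour. The matched
vertices form a vertex cover (by maximality) of size at most `2 τ(G)` (every cover contains an
endpoint of each matched edge). Selecting them costs at most `2 τ(G)`; reserving them instead
costs `α · 2 τ(G)` for the reservations plus `τ(G)` for an optimal cover bought at the end. -/

open Finset

namespace GreedyMatching

variable (r r' : ℕ → ℕ → Prop)

def freeEarlierNeighbors (M : Finset ℕ) (i : ℕ) : Set ℕ :=
  {k | k < i ∧ r k i ∧ k ∉ M}

open Classical in
noncomputable def matched : ℕ → Finset ℕ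
  | 0 => ∅
  | i + 1 =>
    if (freeEarlierNeighbors r (matched i) i).Nonempty then
      {i, sInf (freeEarlierNeighbors r (matched i) i)} ∪ matched i
    else matched i

variable {r r'}

theorem lt_of_mem_matched {i k : ℕ} (hk : k ∈ matched r i) : k < i := by
  induction i with
  | zero => simp [matched] at hk
  | succ i ih =>
    rw [matched] at hk
    split_ifs at hk with hne
    · rcases mem_union.1 hk with hk | hk
      · rcases mem_insert.1 hk with rfl | hk
        · exact Nat.lt_add_one k
        · exact (mem_singleton.1 hk ▸ Nat.sInf_mem hne).1.trans i.lt_add_one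
      · exact (ih hk).trans i.lt_add_one
    · exact (ih hk).trans i.lt_add_one

theorem matched_mono : Monotone (matched r) := by
  refine monotone_nat_of_le_succ fun i => ?_
  rw [matched]
  split_ifs
  exacts [subset_union_right, subset_rfl]

theorem mem_or_mem_matched_of_lt {a b i : ℕ} (hab : a < b) (hbi : b < i) (h : r a b) :
    a ∈ matched r i ∨ b ∈ matched r i := by
  by_cases ha : a ∈ matched r b
  · exact .inl (matched_mono hbi.le ha)
  · have hne : (freeEarlierNeighbors r (matched r b) b).Nonempty := ⟨a, hab, h, ha⟩
    have hb : b ∈ matched r (b + 1) := by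
      rw [matched, if_pos hne]
      simp
    exact .inr (matched_mono hbi hb)

theorem card_matched_le_two_mul_card_inter {C : Finset ℕ}
    (hC : ∀ a b, r a b → a ∈ C ∨ b ∈ C) (i : ℕ) :
    #(matched r i) ≤ 2 * #(matched r i ∩ C) := by
  induction i with
  | zero => simp [matched]
  | succ i ih =>
    rw [matched]
    split_ifs with hne
    · set k := sInf (freeEarlierNeighbors r (matched r i) i)
      obtain ⟨hki, hrk, hk⟩ : k ∈ freeEarlierNeighbors r (matched r i) i := Nat.sInf_mem hne
      have hi : i ∉ matched r i := fun h => (lt_of_mem_matched h).false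
      have hdisj : Disjoint {i, k} (matched r i) := by simp [hi, hk]
      have hnew : 1 ≤ #({i, k} ∩ C) := by
        rcases hC k i hrk with h | h
        · exact card_pos.2 ⟨k, by simp [h]⟩
        · exact card_pos.2 ⟨i, by simp [h]⟩
      have hpair : #({i, k} ∩ C) ≤ 2 := (card_le_card inter_subset_left).trans card_le_two
      rw [union_inter_distrib_right, card_union_of_disjoint hdisj,
        card_union_of_disjoint (hdisj.mono inter_subset_left inter_subset_left),
        card_pair hki.ne']
      omega
    · exact ih

theorem card_matched_le {C : Finset ℕ} (hC : ∀ a b, r a b → a ∈ C ∨ b ∈ C) (i : ℕ) :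
    #(matched r i) ≤ 2 * #C :=
  (card_matched_le_two_mul_card_inter hC i).trans
    (Nat.mul_le_mul_left 2 (card_le_card inter_subset_right))

theorem matched_congr {i : ℕ} (h : ∀ a b, a < i → b < i → (r a b ↔ r' a b)) :
    matched r i = matched r' i := by
  induction i with
  | zero => rfl
  | succ i ih =>
    have hprev := ih fun a b ha hb => h a b (ha.trans i.lt_add_one) (hb.trans i.lt_add_one)
    have hfree : freeEarlierNeighbors r (matched r i) i =
        freeEarlierNeighbors r' (matched r' i) i := by
      ext k
      simp only [freeEarlierNeighbors, Set.mem_ofPred_eq, hprev]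
      exact and_congr_right fun hk => and_congr_left' (h k i (hk.trans i.lt_add_one) i.lt_add_one)
    rw [matched, matched, hfree, hprev]

end GreedyMatching

section MatchedVertices

variable {n : ℕ} (G : SimpleGraph (Fin n))

/-- `G` as a relation on `ℕ`, to compare prefixes of instances of different sizes. -/
def natAdj (a b : ℕ) : Prop :=
  ∃ (ha : a < n) (hb : b < n), G.Adj ⟨a, ha⟩ ⟨b, hb⟩

noncomputable def matchedVertices (i : ℕ) : Finset (Fin n) :=
  (GreedyMatching.matched (natAdj G) i).preimage Fin.val Fin.val_injective.injOn

variable {G}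

theorem mem_matchedVertices {i : ℕ} {v : Fin n} :
    v ∈ matchedVertices G i ↔ (v : ℕ) ∈ GreedyMatching.matched (natAdj G) i :=
  mem_preimage

theorem val_lt_of_mem_matchedVertices {i : ℕ} {v : Fin n} (hv : v ∈ matchedVertices G i) :
    (v : ℕ) < i :=
  GreedyMatching.lt_of_mem_matched (mem_matchedVertices.1 hv)

theorem matchedVertices_mono : Monotone (matchedVertices G) := fun _ _ hij _ hv =>
  mem_matchedVertices.2 (GreedyMatching.matched_mono hij (mem_matchedVertices.1 hv))

theorem image_val_matchedVertices {i : ℕ} (hi : i ≤ n) :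
    (matchedVertices G i).image Fin.val = GreedyMatching.matched (natAdj G) i := by
  ext k
  simp only [mem_image, mem_matchedVertices]
  refine ⟨fun ⟨v, hv, hvk⟩ => hvk ▸ hv, fun hk => ⟨⟨k, ?_⟩, hk, rfl⟩⟩
  exact (GreedyMatching.lt_of_mem_matched hk).trans_le hi

theorem mem_or_mem_matchedVertices_of_adj {i : ℕ} {x y : Fin n} (hx : (x : ℕ) < i)
    (hy : (y : ℕ) < i) (h : G.Adj x y) :
    x ∈ matchedVertices G i ∨ y ∈ matchedVertices G i := by
  simp only [mem_matchedVertices]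
  rcases lt_or_gt_of_ne (Fin.val_ne_of_ne h.ne) with hxy | hyx
  · exact GreedyMatching.mem_or_mem_matched_of_lt hxy hy ⟨x.2, y.2, h⟩
  · exact (GreedyMatching.mem_or_mem_matched_of_lt hyx hx ⟨y.2, x.2, h.symm⟩).symm

theorem isVC_matchedVertices : IsVC G (matchedVertices G n) := fun x y h =>
  mem_or_mem_matchedVertices_of_adj x.2 y.2 h

theorem card_matchedVertices_le {S : Finset (Fin n)} (hS : IsVC G S) (i : ℕ) :
    #(matchedVertices G i) ≤ 2 * #S := by
  have hC : ∀ a b, natAdj G a b → a ∈ S.image Fin.val ∨ b ∈ S.image Fin.val := by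
    rintro a b ⟨ha, hb, h⟩
    rcases hS h with h | h
    exacts [.inl (mem_image_of_mem _ h), .inr (mem_image_of_mem _ h)]
  calc #(matchedVertices G i)
      ≤ #(GreedyMatching.matched (natAdj G) i) := by
        rw [matchedVertices, card_preimage]; exact card_filter_le _ _
    _ ≤ 2 * #(S.image Fin.val) := GreedyMatching.card_matched_le hC i
    _ ≤ 2 * #S := Nat.mul_le_mul_left 2 card_image_le

theorem matchedVertices_online {m i : ℕ} {G' : SimpleGraph (Fin m)} (hn : i ≤ n) (hm : i ≤ m)
    (h : ∀ x y : Fin i, G.Adj (Fin.castLE hn x) (Fin.castLE hn y) ↔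
      G'.Adj (Fin.castLE hm x) (Fin.castLE hm y)) :
    (matchedVertices G i).image Fin.val = (matchedVertices G' i).image Fin.val := by
  rw [image_val_matchedVertices hn, image_val_matchedVertices hm]
  refine GreedyMatching.matched_congr fun a b ha hb => ?_
  have hab := h ⟨a, ha⟩ ⟨b, hb⟩
  exact ⟨fun ⟨_, _, hG⟩ => ⟨ha.trans_le hm, hb.trans_le hm, hab.1 hG⟩,
    fun ⟨_, _, hG'⟩ => ⟨ha.trans_le hn, hb.trans_le hn, hab.2 hG'⟩⟩

end MatchedVertices

theorem exists_isVC_card_eq_vcNum {n : ℕ} (G : SimpleGraph (Fin n)) :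
    ∃ S, IsVC G S ∧ #S = vcNum G :=
  Nat.sInf_mem (s := {k | ∃ S : Finset (Fin n), IsVC G S ∧ #S = k})
    ⟨_, univ, fun x _ _ => .inl (mem_univ x), rfl⟩

noncomputable def matchingAlgorithm (reserve : Bool) : DelayedVCAlgorithmRes where
  S _ G i := if reserve then ∅ else matchedVertices G i
  R _ G i := if reserve then matchedVertices G i else ∅
  memS_lt _ _ _ _ hv := by
    cases reserve
    exacts [val_lt_of_mem_matchedVertices hv, absurd hv (notMem_empty _)]
  memR_lt _ _ _ _ hv := by
    cases reserve
    exacts [absurd hv (notMem_empty _), val_lt_of_mem_matchedVertices hv]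
  online _ _ _ _ _ hn hm h := by
    cases reserve <;> simp [matchedVertices_online hn hm h]
  irrevocableS _ _ i _ := by
    cases reserve
    exacts [matchedVertices_mono i.le_succ, subset_rfl]
  irrevocableR _ _ i _ := by
    cases reserve
    exacts [subset_rfl, matchedVertices_mono i.le_succ]
  valid _ _ _ _ x y hx hy hxM hyM h := by
    have hcover := mem_or_mem_matchedVertices_of_adj hx hy h
    cases reserve <;> simp_all

theorem resCost_select_le (α : ℝ) {n : ℕ} (G : SimpleGraph (Fin n)) :
    resCost (matchingAlgorithm false) α n G ≤ 2 * vcNum G := by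
  obtain ⟨S, hS, hcard⟩ := exists_isVC_card_eq_vcNum G
  have hcompletion : sInf {k : ℕ | ∃ T : Finset (Fin n),
      IsVC G ((matchingAlgorithm false).S n G n ∪ T) ∧ #T = k} = 0 :=
    Nat.sInf_eq_zero.2
      (.inl ⟨∅, by simpa [matchingAlgorithm] using isVC_matchedVertices, rfl⟩)
  have hsel : #((matchingAlgorithm false).S n G n) ≤ 2 * vcNum G :=
    hcard ▸ card_matchedVertices_le hS n
  rw [resCost, hcompletion]
  simpa [matchingAlgorithm] using (Nat.cast_le (α := ℝ)).2 hsel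

theorem resCost_reserve_le {α : ℝ} (hα : 0 ≤ α) {n : ℕ} (G : SimpleGraph (Fin n)) :
    resCost (matchingAlgorithm true) α n G ≤ (1 + 2 * α) * vcNum G := by
  obtain ⟨S, hS, hcard⟩ := exists_isVC_card_eq_vcNum G
  have hcompletion : sInf {k : ℕ | ∃ T : Finset (Fin n),
      IsVC G ((matchingAlgorithm true).S n G n ∪ T) ∧ #T = k} = vcNum G := by
    simp [matchingAlgorithm, vcNum]
  have hres : (#((matchingAlgorithm true).R n G n) : ℝ) ≤ 2 * vcNum G := by
    exact_mod_cast hcard ▸ card_matchedVertices_le hS n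
  rw [resCost, hcompletion]
  simp only [matchingAlgorithm, if_true, card_empty, Nat.cast_zero, zero_add] at hres ⊢
  nlinarith

/-- There is a `min {1 + 2α, 2}`-competitive deterministic delayed-decision algorithm
with reservations for online Vertex Cover. -/
theorem vc_reservation_upper_bound (α : ℝ) (hα : 0 ≤ α) :
    ∃ A : DelayedVCAlgorithmRes, ∀ (n : ℕ) (G : SimpleGraph (Fin n)),
      resCost A α n G ≤ min (1 + 2 * α) 2 * (vcNum G : ℝ) := by
  rcases le_total α (1 / 2) with hsmall | hlarge
  · refine ⟨matchingAlgorithm true, fun n G => ?_⟩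
    rw [min_eq_left (by linarith)]
    exact resCost_reserve_le hα G
  · refine ⟨matchingAlgorithm false, fun n G => ?_⟩
    rw [min_eq_right (by linarith)]
    exact resCost_select_le α G
end

section
/- For every real α > 1/2, every real ε > 0 and every deterministic delayed-decision algorithm with reservations for online Vertex Cover, there exists an instance (n, G) with τ(G) ≥ 1 whose cost with reservation cost α exceeds (2 − ε)·τ(G). In other words, for α > 1/2 no such algorithm is better than 2-competitive. -/
/-! The adversary presents a tree online, attaching each new vertex to the *pending* vertex, the
only presented vertex that may still be neither selected nor reserved. Validity forces the
algorithm to select or reserve every other vertex, so after `M + 1` vertices `|S| + |R \ S| ≥ M`.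
The tree is bipartite by depth parity; for the better of the two parity classes `O`, the
adversary hangs a pendant leaf on every vertex of `O` that is reserved but not selected. `O` still
covers all edges, while every leaf edge costs the algorithm a further selected or completing
vertex; averaging over the two classes gives cost `≥ 2|O| - 1 ≥ 2τ - 1`. Since also
cost `≥ M / 2`, taking `M` large beats `(2 - ε) τ` whether `τ` is small or large. -/

open SimpleGraph

open Finset

section Counting

variable {α : Type*} [DecidableEq α]

lemma card_le_card_inter_of_matching {C W : Finset α} {f : α → α} (hf : Set.InjOn f W)
    (hWf : Disjoint W (W.image f)) (hC : ∀ w ∈ W, w ∈ C ∨ f w ∈ C) :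
    #W ≤ #(C ∩ (W ∪ W.image f)) := by
  have hsub : (C ∩ W) ∪ (W \ C).image f ⊆ C ∩ (W ∪ W.image f) := by
    refine union_subset (inter_subset_inter_left subset_union_left) ?_
    intro x hx
    obtain ⟨w, hw, rfl⟩ := mem_image.mp hx
    obtain ⟨hwW, hwC⟩ := mem_sdiff.mp hw
    exact mem_inter.mpr ⟨(hC w hwW).resolve_left hwC,
      mem_union_right _ (mem_image_of_mem f hwW)⟩
  have hdisj : Disjoint (C ∩ W) ((W \ C).image f) :=
    hWf.mono inter_subset_right (image_subset_image sdiff_subset)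
  calc #W = #(C ∩ W) + #(W \ C) := (card_inter_add_card_sdiff W C).symm.trans (by rw [inter_comm])
    _ = #((C ∩ W) ∪ (W \ C).image f) := by
      rw [card_union_of_disjoint hdisj, card_image_of_injOn (hf.mono (by simp))]
    _ ≤ _ := card_le_card hsub

lemma card_add_card_le_of_matching {S₀ S T W : Finset α} {f : α → α} (hf : Set.InjOn f W)
    (hWf : Disjoint W (W.image f)) (hS₀ : S₀ ⊆ S) (hS₀W : Disjoint S₀ (W ∪ W.image f))
    (hcov : ∀ w ∈ W, w ∈ S ∪ T ∨ f w ∈ S ∪ T) :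
    #S₀ + #W ≤ #S + #T := by
  set X := W ∪ W.image f
  have hW : #W ≤ #(S ∩ X) + #T :=
    (card_le_card_inter_of_matching hf hWf hcov).trans <| by
      rw [union_inter_distrib_right]
      exact (card_union_le _ _).trans (add_le_add_right (card_le_card inter_subset_left) _)
  have hS : #S₀ + #(S ∩ X) ≤ #S := by
    rw [← card_union_of_disjoint (hS₀W.mono_right inter_subset_right)]
    exact card_le_card (union_subset hS₀ inter_subset_left)
  omega

lemma exists_card_add_four_mul_card_filter_le {β : Type*} (s t : Finset β) (f : β → Bool) :
    ∃ b, #s + 4 * #(t.filter (f · = b)) ≤ 2 * #(s.filter (f · = b)) + 2 * #t := by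
  have hs := card_filter_add_card_filter_not (s := s) (f · = true)
  have ht := card_filter_add_card_filter_not (s := t) (f · = true)
  simp only [Bool.not_eq_true] at hs ht
  by_cases h : #s + 4 * #(t.filter (f · = true)) ≤ 2 * #(s.filter (f · = true)) + 2 * #t
  · exact ⟨true, h⟩
  · exact ⟨false, by omega⟩

end Counting

section VertexCover

variable {n : ℕ}

lemma vcNum_le_card {G : SimpleGraph (Fin n)} {C : Finset (Fin n)} (hC : IsVC G C) :
    vcNum G ≤ #C :=
  Nat.sInf_le ⟨C, hC, rfl⟩

lemma one_le_vcNum_of_adj {G : SimpleGraph (Fin n)} {x y : Fin n} (h : G.Adj x y) :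
    1 ≤ vcNum G := by
  have hne : {k | ∃ C, IsVC G C ∧ #C = k}.Nonempty :=
    ⟨_, univ, fun x _ _ => Or.inl (mem_univ x), rfl⟩
  obtain ⟨C, hC, hcard⟩ := Nat.sInf_mem hne
  rw [vcNum, ← hcard, one_le_card]
  rcases hC h with h | h <;> exact ⟨_, h⟩

lemma exists_isVC_union_card_eq_sInf (G : SimpleGraph (Fin n)) (S : Finset (Fin n)) :
    ∃ T, IsVC G (S ∪ T) ∧ #T = sInf {k | ∃ T, IsVC G (S ∪ T) ∧ #T = k} :=
  Nat.sInf_mem (s := {k | ∃ T, IsVC G (S ∪ T) ∧ #T = k})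
    ⟨_, univ, fun x _ _ => Or.inl (mem_union_right _ (mem_univ x)), rfl⟩

lemma vcNum_comap_val_le {H : SimpleGraph ℕ} {O : Finset ℕ}
    (hO : ∀ x < n, ∀ y < n, H.Adj x y → x ∈ O ∨ y ∈ O) :
    vcNum (H.comap (Fin.val : Fin n → ℕ)) ≤ #O := by
  let C : Finset (Fin n) := univ.filter fun v => (v : ℕ) ∈ O
  have hC : IsVC (H.comap Fin.val) C := fun x y h => by
    simpa [C] using hO x x.isLt y y.isLt h
  calc vcNum _ ≤ #C := vcNum_le_card hC
    _ = #(C.image Fin.val) := (card_image_of_injective _ Fin.val_injective).symm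
    _ ≤ #O := card_le_card fun v hv => by
      obtain ⟨x, hx, rfl⟩ := mem_image.mp hv
      exact (mem_filter.mp hx).2

lemma IsVC.mem_image_val_or_mem_image_val {H : SimpleGraph ℕ} {C : Finset (Fin n)}
    (hC : IsVC (H.comap Fin.val) C) {x y : ℕ} (hx : x < n) (hy : y < n) (h : H.Adj x y) :
    x ∈ C.image Fin.val ∨ y ∈ C.image Fin.val :=
  (hC (x := ⟨x, hx⟩) (y := ⟨y, hy⟩) h).imp (mem_image_of_mem Fin.val)
    (mem_image_of_mem Fin.val)

end VertexCover

section ParentGraph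

def parentGraph (p : ℕ → ℕ) : SimpleGraph ℕ :=
  SimpleGraph.fromRel fun i j => i < j ∧ p j = i

variable {p q : ℕ → ℕ}

lemma parentGraph_adj {i j : ℕ} :
    (parentGraph p).Adj i j ↔ i < j ∧ p j = i ∨ j < i ∧ p i = j := by
  rw [parentGraph, SimpleGraph.fromRel_adj]
  constructor
  · exact fun h => h.2
  · rintro (h | h) <;> [exact ⟨h.1.ne, Or.inl h⟩; exact ⟨h.1.ne', Or.inr h⟩]

lemma parentGraph_adj_parent {j : ℕ} (hj : p j < j) : (parentGraph p).Adj (p j) j :=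
  parentGraph_adj.mpr (Or.inl ⟨hj, rfl⟩)

lemma parentGraph_adj_congr {n i j : ℕ} (h : ∀ k < n, p k = q k) (hi : i < n) (hj : j < n) :
    (parentGraph p).Adj i j ↔ (parentGraph q).Adj i j := by
  rw [parentGraph_adj, parentGraph_adj, h i hi, h j hj]

def parentParity (p : ℕ → ℕ) (j : ℕ) : Bool :=
  if p j < j then !parentParity p (p j) else false
decreasing_by assumption

lemma parentParity_ne_of_adj {i j : ℕ} (h : (parentGraph p).Adj i j) :
    parentParity p i ≠ parentParity p j := by
  have parity_parent : ∀ {i j}, i < j → p j = i → parentParity p j = !parentParity p i := by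
    rintro i j hij rfl
    rw [parentParity, if_pos hij]
  rcases parentGraph_adj.mp h with ⟨hij, hp⟩ | ⟨hji, hp⟩
  · simp [parity_parent hij hp]
  · simp [parity_parent hji hp]

lemma parentParity_eq_or_eq_of_adj {i j : ℕ} (h : (parentGraph p).Adj i j) (b : Bool) :
    parentParity p i = b ∨ parentParity p j = b := by
  have hne := parentParity_ne_of_adj h
  revert hne
  generalize parentParity p i = x
  generalize parentParity p j = y
  cases b <;> cases x <;> cases y <;> simp

-- Vertex `w + N` becomes a leaf under `w` when `w ∈ W`; every other vertex `j ≥ N` is its own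
-- parent, hence isolated.
def attachLeaves (p : ℕ → ℕ) (N : ℕ) (W : Finset ℕ) (j : ℕ) : ℕ :=
  if j < N then p j else if j - N ∈ W then j - N else j

variable {N : ℕ} {W : Finset ℕ}

lemma attachLeaves_of_lt {j : ℕ} (hj : j < N) : attachLeaves p N W j = p j := if_pos hj

lemma parentGraph_attachLeaves_adj_leaf {w : ℕ} (hw : w ∈ W) (hwN : w < N) :
    (parentGraph (attachLeaves p N W)).Adj w (w + N) := by
  have hleaf : attachLeaves p N W (w + N) = w := by
    rw [attachLeaves, if_neg (by omega), Nat.add_sub_cancel, if_pos hw]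
  simpa only [hleaf] using parentGraph_adj_parent (p := attachLeaves p N W) (j := w + N)
    (by omega)

lemma parentGraph_attachLeaves_adj {i j : ℕ} (h : (parentGraph (attachLeaves p N W)).Adj i j) :
    (parentGraph p).Adj i j ∧ i < N ∧ j < N ∨ i ∈ W ∨ j ∈ W := by
  have edge_to_parent : ∀ {i j}, i < j → attachLeaves p N W j = i →
      (parentGraph p).Adj i j ∧ i < N ∧ j < N ∨ i ∈ W := by
    intro i j hij hq
    unfold attachLeaves at hq
    split_ifs at hq with hjN hjW
    · exact Or.inl ⟨parentGraph_adj.mpr (Or.inl ⟨hij, hq⟩), by omega, hjN⟩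
    · exact Or.inr (hq ▸ hjW)
    · omega
  rcases parentGraph_adj.mp h with ⟨hij, hq⟩ | ⟨hji, hq⟩
  · rcases edge_to_parent hij hq with h | h
    · exact Or.inl h
    · exact Or.inr (Or.inl h)
  · rcases edge_to_parent hji hq with ⟨h, hj, hi⟩ | h
    · exact Or.inl ⟨h.symm, hi, hj⟩
    · exact Or.inr (Or.inr h)

end ParentGraph

namespace DelayedVCAlgorithmRes

variable (A : DelayedVCAlgorithmRes)

-- The run of `A` on the prefixes of a graph on `ℕ`, read as sets of naturals; by `online`, the
-- horizon at which a prefix is observed does not matter (`image_S_eq_selected`).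
noncomputable def selected (H : SimpleGraph ℕ) (i : ℕ) : Finset ℕ :=
  (A.S i (H.comap Fin.val) i).image Fin.val

noncomputable def reserved (H : SimpleGraph ℕ) (i : ℕ) : Finset ℕ :=
  (A.R i (H.comap Fin.val) i).image Fin.val

noncomputable def covered (H : SimpleGraph ℕ) (i : ℕ) : Finset ℕ :=
  A.selected H i ∪ A.reserved H i

noncomputable def reservedOnly (H : SimpleGraph ℕ) (i : ℕ) : Finset ℕ :=
  A.reserved H i \ A.selected H i

variable {A} {H H' : SimpleGraph ℕ}

lemma online_comap {i n m : ℕ} (hn : i ≤ n) (hm : i ≤ m)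
    (h : ∀ x < i, ∀ y < i, H.Adj x y ↔ H'.Adj x y) :
    (A.S n (H.comap Fin.val) i).image Fin.val = (A.S m (H'.comap Fin.val) i).image Fin.val ∧
      (A.R n (H.comap Fin.val) i).image Fin.val = (A.R m (H'.comap Fin.val) i).image Fin.val :=
  A.online n m _ _ i hn hm fun x y => by simpa using h x x.isLt y y.isLt

lemma selected_eq_of_agree {i : ℕ} (h : ∀ x < i, ∀ y < i, H.Adj x y ↔ H'.Adj x y) :
    A.selected H i = A.selected H' i :=
  (online_comap le_rfl le_rfl h).1

lemma reserved_eq_of_agree {i : ℕ} (h : ∀ x < i, ∀ y < i, H.Adj x y ↔ H'.Adj x y) :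
    A.reserved H i = A.reserved H' i :=
  (online_comap le_rfl le_rfl h).2

lemma covered_eq_of_agree {i : ℕ} (h : ∀ x < i, ∀ y < i, H.Adj x y ↔ H'.Adj x y) :
    A.covered H i = A.covered H' i := by
  rw [covered, covered, selected_eq_of_agree h, reserved_eq_of_agree h]

lemma image_S_eq_selected {i n : ℕ} (hn : i ≤ n) :
    (A.S n (H.comap Fin.val) i).image Fin.val = A.selected H i :=
  (online_comap hn le_rfl fun _ _ _ _ => Iff.rfl).1

lemma image_R_eq_reserved {i n : ℕ} (hn : i ≤ n) :
    (A.R n (H.comap Fin.val) i).image Fin.val = A.reserved H i :=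
  (online_comap hn le_rfl fun _ _ _ _ => Iff.rfl).2

lemma S_subset_of_le {n : ℕ} {G : SimpleGraph (Fin n)} {i j : ℕ} (hij : i ≤ j)
    (hj : j ≤ n) :
    A.S n G i ⊆ A.S n G j := by
  induction j, hij using Nat.le_induction with
  | base => exact subset_rfl
  | succ k _ ih => exact (ih (by omega)).trans (A.irrevocableS n G k (by omega))

lemma R_subset_of_le {n : ℕ} {G : SimpleGraph (Fin n)} {i j : ℕ} (hij : i ≤ j)
    (hj : j ≤ n) :
    A.R n G i ⊆ A.R n G j := by
  induction j, hij using Nat.le_induction with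
  | base => exact subset_rfl
  | succ k _ ih => exact (ih (by omega)).trans (A.irrevocableR n G k (by omega))

lemma selected_mono {i j : ℕ} (hij : i ≤ j) : A.selected H i ⊆ A.selected H j := by
  rw [← image_S_eq_selected hij]
  exact image_subset_image (S_subset_of_le hij le_rfl)

lemma reserved_mono {i j : ℕ} (hij : i ≤ j) : A.reserved H i ⊆ A.reserved H j := by
  rw [← image_R_eq_reserved hij]
  exact image_subset_image (R_subset_of_le hij le_rfl)

lemma covered_mono {i j : ℕ} (hij : i ≤ j) : A.covered H i ⊆ A.covered H j :=
  union_subset_union (selected_mono hij) (reserved_mono hij)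

lemma selected_subset_range (i : ℕ) : A.selected H i ⊆ range i := by
  intro v hv
  obtain ⟨x, hx, rfl⟩ := mem_image.mp hv
  exact mem_range.mpr (A.memS_lt _ _ i x hx)

lemma reserved_subset_range (i : ℕ) : A.reserved H i ⊆ range i := by
  intro v hv
  obtain ⟨x, hx, rfl⟩ := mem_image.mp hv
  exact mem_range.mpr (A.memR_lt _ _ i x hx)

lemma not_adj_of_notMem_covered {i x y : ℕ} (hx : x < i) (hy : y < i)
    (hxC : x ∉ A.covered H i) (hyC : y ∉ A.covered H i) : ¬ H.Adj x y := by
  have notMem : ∀ {z} (hz : z < i), z ∉ A.covered H i →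
      (⟨z, hz⟩ : Fin i) ∉ A.S i (H.comap Fin.val) i ∪ A.R i (H.comap Fin.val) i := by
    intro z hz hzC hmem
    refine hzC ?_
    rcases mem_union.mp hmem with h | h
    · exact mem_union_left _ (mem_image_of_mem Fin.val h)
    · exact mem_union_right _ (mem_image_of_mem Fin.val h)
  exact A.valid i _ i le_rfl ⟨x, hx⟩ ⟨y, hy⟩ hx hy (notMem hx hxC) (notMem hy hyC)

/-- Each leaf edge `{w, w + N}` has to be paid for by the final selection or by its completion,
and the vertices selected at time `N` lie on none of these edges. -/
lemma card_selected_add_card_add_le_resCost {α : ℝ} (hα : 0 ≤ α) {N n : ℕ} (hn : N + N ≤ n)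
    {W : Finset ℕ} (hW : W ⊆ A.reservedOnly H N)
    (hleaf : ∀ w ∈ W, H.Adj w (w + N)) :
    (#(A.selected H N) : ℝ) + #W + α * #(A.reserved H N) ≤
      resCost A α n (H.comap Fin.val) := by
  set G := H.comap (Fin.val : Fin n → ℕ)
  obtain ⟨T, hT, hTcard⟩ := exists_isVC_union_card_eq_sInf G (A.S n G n)
  have hWN : ∀ w ∈ W, w < N := fun w hw =>
    mem_range.mp (reserved_subset_range N (mem_sdiff.mp (hW hw)).1)
  have hcount : #(A.selected H N) + #W ≤ #(A.selected H n) + #(T.image Fin.val) := by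
    refine card_add_card_le_of_matching (f := (· + N)) (add_left_injective N).injOn ?_
      (selected_mono (by omega)) ?_ fun w hw => ?_
    · refine disjoint_left.mpr fun w hw hw' => ?_
      obtain ⟨v, -, rfl⟩ := mem_image.mp hw'
      have := hWN _ hw
      omega
    · refine disjoint_left.mpr fun v hv hv' => ?_
      have hvN := mem_range.mp (selected_subset_range N hv)
      rcases mem_union.mp hv' with h | h
      · exact (mem_sdiff.mp (hW h)).2 hv
      · obtain ⟨u, -, rfl⟩ := mem_image.mp h
        omega
    · have hwN := hWN w hw
      have := hT.mem_image_val_or_mem_image_val (by omega) (by omega) (hleaf w hw)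
      rwa [image_union] at this
  have hres : #(A.reserved H N) ≤ #(A.reserved H n) := card_le_card (reserved_mono (by omega))
  have hS : #(A.selected H n) = #(A.S n G n) := card_image_of_injective _ Fin.val_injective
  have hR : #(A.reserved H n) = #(A.R n G n) := card_image_of_injective _ Fin.val_injective
  have hT' : #(T.image Fin.val) = #T := card_image_of_injective _ Fin.val_injective
  unfold resCost
  rw [← hTcard, ← hS, ← hR, ← hT']
  have hcount' := (Nat.cast_le (α := ℝ)).mpr hcount
  have hres' := mul_le_mul_of_nonneg_left ((Nat.cast_le (α := ℝ)).mpr hres) hα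
  push_cast at hcount'
  linarith

variable (A)

-- The parent function is cut off above `n + 1`, so that the recursion only refers to earlier
-- stages; `pending_succ` restates the step for the whole adversary tree.
noncomputable def pending : ℕ → ℕ
  | 0 => 0
  | n + 1 =>
    if pending n ∈ A.covered
        (parentGraph fun j => if h : j ≤ n + 1 then pending (j - 1) else 0) (n + 2)
    then n + 1 else pending n

noncomputable def adversaryParent (j : ℕ) : ℕ := A.pending (j - 1)

noncomputable def adversaryTree : SimpleGraph ℕ := parentGraph A.adversaryParent

lemma pending_zero : A.pending 0 = 0 := by
  rw [pending]

lemma pending_succ (n : ℕ) :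
    A.pending (n + 1) =
      if A.pending n ∈ A.covered A.adversaryTree (n + 2) then n + 1 else A.pending n := by
  rw [pending, covered_eq_of_agree (H' := A.adversaryTree) fun x hx y hy =>
    parentGraph_adj_congr (fun k hk => dif_pos (by omega)) hx hy]

lemma pending_le (n : ℕ) : A.pending n ≤ n := by
  induction n with
  | zero => exact A.pending_zero.le
  | succ n ih =>
    rw [pending_succ]
    split_ifs <;> omega

lemma adversaryTree_adj_pending (n : ℕ) : A.adversaryTree.Adj (A.pending n) (n + 1) :=
  parentGraph_adj_parent (p := A.adversaryParent) (j := n + 1) (Nat.lt_succ_of_le (A.pending_le n))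

lemma mem_covered_of_ne_pending {n v : ℕ} (hv : v ≤ n) (hvp : v ≠ A.pending n) :
    v ∈ A.covered A.adversaryTree (n + 1) := by
  induction n generalizing v with
  | zero => exact absurd (Nat.le_zero.mp hv) (A.pending_zero ▸ hvp)
  | succ n ih =>
    have hmono := covered_mono (A := A) (H := A.adversaryTree) (Nat.le_succ (n + 1))
    by_cases hcov : A.pending n ∈ A.covered A.adversaryTree (n + 2)
    · rw [pending_succ, if_pos hcov] at hvp
      by_cases hvn : v = A.pending n
      · exact hvn ▸ hcov
      · exact hmono (ih (by omega) hvn)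
    · rw [pending_succ, if_neg hcov] at hvp
      rcases Nat.lt_or_ge v (n + 1) with hvn | hvn
      · exact hmono (ih (by omega) hvp)
      · -- the new vertex `n + 1` is adjacent to the still uncovered old pending vertex
        by_contra hvC
        obtain rfl : v = n + 1 := by omega
        exact not_adj_of_notMem_covered (by have := A.pending_le n; omega) (by omega) hcov hvC
          (A.adversaryTree_adj_pending n)

lemma le_card_selected_add_card_reservedOnly (M : ℕ) :
    M ≤ #(A.selected A.adversaryTree (M + 1)) + #(A.reservedOnly A.adversaryTree (M + 1)) := by
  have hsub : range (M + 1) ⊆ A.covered A.adversaryTree (M + 1) ∪ {A.pending M} := by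
    intro v hv
    by_cases hvp : v = A.pending M
    · exact mem_union_right _ (mem_singleton.mpr hvp)
    · exact mem_union_left _
        (A.mem_covered_of_ne_pending (Nat.lt_succ_iff.mp (mem_range.mp hv)) hvp)
  have hcard := (card_le_card hsub).trans (card_union_le _ _)
  rw [card_range, card_singleton, covered, union_comm, ← card_sdiff_add_card] at hcard
  rw [reservedOnly]
  omega

variable (M : ℕ) (b : Bool)

noncomputable def paritySide : Finset ℕ :=
  (range (M + 1)).filter (parentParity A.adversaryParent · = b)

noncomputable def starred : Finset ℕ :=
  (A.reservedOnly A.adversaryTree (M + 1)).filter (parentParity A.adversaryParent · = b)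

noncomputable def hardTree : SimpleGraph ℕ :=
  parentGraph (attachLeaves A.adversaryParent (M + 1) (A.starred M b))

noncomputable def hardInstance : SimpleGraph (Fin (M + 1 + (M + 1))) :=
  (A.hardTree M b).comap Fin.val

lemma hardTree_adj_iff {x y : ℕ} (hx : x < M + 1) (hy : y < M + 1) :
    (A.hardTree M b).Adj x y ↔ A.adversaryTree.Adj x y :=
  parentGraph_adj_congr (fun _ hk => attachLeaves_of_lt hk) hx hy

lemma exists_parity_card_le :
    ∃ b, #(A.reservedOnly A.adversaryTree (M + 1)) + 4 * #(A.paritySide M b) ≤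
      2 * #(A.starred M b) + 2 * (M + 1) := by
  have := exists_card_add_four_mul_card_filter_le
    (A.reservedOnly A.adversaryTree (M + 1)) (range (M + 1)) (parentParity A.adversaryParent)
  rwa [card_range] at this

lemma card_selected_add_card_starred_add_half_le_resCost {α : ℝ} (hα : 1 / 2 ≤ α) :
    (#(A.selected A.adversaryTree (M + 1)) : ℝ) + #(A.starred M b) +
        #(A.reservedOnly A.adversaryTree (M + 1)) / 2 ≤
      resCost A α (M + 1 + (M + 1)) (A.hardInstance M b) := by
  have hagree := fun x hx y hy => A.hardTree_adj_iff M b (x := x) (y := y) hx hy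
  have hsel := selected_eq_of_agree (A := A) hagree
  have hres := reserved_eq_of_agree (A := A) hagree
  have hstar : A.starred M b ⊆ A.reservedOnly (A.hardTree M b) (M + 1) := by
    rw [reservedOnly, hsel, hres]
    exact filter_subset _ _
  have hcost := card_selected_add_card_add_le_resCost (by linarith) le_rfl hstar fun w hw =>
    parentGraph_attachLeaves_adj_leaf hw
      (mem_range.mp (reserved_subset_range _ (mem_sdiff.mp (hstar hw)).1))
  rw [hsel, hres] at hcost
  have hsub : (#(A.reservedOnly A.adversaryTree (M + 1)) : ℝ) ≤
      #(A.reserved A.adversaryTree (M + 1)) := by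
    exact_mod_cast card_le_card sdiff_subset
  have : (0 : ℝ) ≤ #(A.reservedOnly A.adversaryTree (M + 1)) := Nat.cast_nonneg _
  rw [hardInstance]
  nlinarith

lemma vcNum_hardInstance_le :
    vcNum (A.hardInstance M b) ≤ #(A.paritySide M b) := by
  refine vcNum_comap_val_le fun x _ y _ hxy => ?_
  have side_mem : ∀ {v}, v < M + 1 → parentParity A.adversaryParent v = b →
      v ∈ A.paritySide M b :=
    fun hv hb => mem_filter.mpr ⟨mem_range.mpr hv, hb⟩
  have starred_mem : ∀ {v}, v ∈ A.starred M b → v ∈ A.paritySide M b := fun hv =>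
    side_mem (mem_range.mp (reserved_subset_range _ (mem_sdiff.mp (mem_filter.mp hv).1).1))
      (mem_filter.mp hv).2
  rcases parentGraph_attachLeaves_adj hxy with ⟨htree, hx, hy⟩ | hx | hy
  · exact (parentParity_eq_or_eq_of_adj htree b).imp (side_mem hx) (side_mem hy)
  · exact Or.inl (starred_mem hx)
  · exact Or.inr (starred_mem hy)

lemma one_le_vcNum_hardInstance (hM : 1 ≤ M) :
    1 ≤ vcNum (A.hardInstance M b) := by
  have hedge : (A.hardTree M b).Adj 0 1 :=
    (A.hardTree_adj_iff M b (by omega) (by omega)).mpr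
      (A.pending_zero ▸ A.adversaryTree_adj_pending 0)
  exact one_le_vcNum_of_adj (G := A.hardInstance M b) (x := ⟨0, by omega⟩) (y := ⟨1, by omega⟩)
    hedge

lemma two_mul_vcNum_sub_one_le_resCost_hardInstance {α : ℝ} (hα : 1 / 2 ≤ α)
    (hb : #(A.reservedOnly A.adversaryTree (M + 1)) + 4 * #(A.paritySide M b) ≤
      2 * #(A.starred M b) + 2 * (M + 1)) :
    2 * (vcNum (A.hardInstance M b) : ℝ) - 1 ≤
      resCost A α (M + 1 + (M + 1)) (A.hardInstance M b) := by
  have hcover : (M : ℝ) ≤ #(A.selected A.adversaryTree (M + 1)) +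
      #(A.reservedOnly A.adversaryTree (M + 1)) := by
    exact_mod_cast A.le_card_selected_add_card_reservedOnly M
  have hτ : (vcNum (A.hardInstance M b) : ℝ) ≤ #(A.paritySide M b) := by
    exact_mod_cast A.vcNum_hardInstance_le M b
  have hb' : (#(A.reservedOnly A.adversaryTree (M + 1)) : ℝ) + 4 * #(A.paritySide M b) ≤
      2 * #(A.starred M b) + 2 * (M + 1) := by exact_mod_cast hb
  linarith [A.card_selected_add_card_starred_add_half_le_resCost M b hα]

lemma half_le_resCost_hardInstance {α : ℝ} (hα : 1 / 2 ≤ α) :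
    (M : ℝ) / 2 ≤ resCost A α (M + 1 + (M + 1)) (A.hardInstance M b) := by
  have hcover : (M : ℝ) ≤ #(A.selected A.adversaryTree (M + 1)) +
      #(A.reservedOnly A.adversaryTree (M + 1)) := by
    exact_mod_cast A.le_card_selected_add_card_reservedOnly M
  have : (0 : ℝ) ≤ #(A.starred M b) := Nat.cast_nonneg _
  linarith [A.card_selected_add_card_starred_add_half_le_resCost M b hα]

end DelayedVCAlgorithmRes

lemma two_sub_mul_lt_of_two_mul_sub_one_le {ε τ c : ℝ} (hε : 0 < ε) (hτ : 0 ≤ τ)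
    (h₁ : 2 * τ - 1 ≤ c) (h₂ : 2 / ε < c) : (2 - ε) * τ < c := by
  rcases le_or_gt (ε * τ) 1 with h | h
  · have : τ ≤ 1 / ε := by rw [le_div_iff₀ hε]; linarith
    have : 2 * τ ≤ 2 / ε := by rw [div_eq_mul_one_div 2 ε]; linarith
    nlinarith
  · linarith

/-- For `α > 1/2`, no deterministic delayed-decision algorithm with reservations for
online Vertex Cover is better than 2-competitive. -/
theorem vc_reservation_lower_bound_large_alpha (α ε : ℝ) (hα : 1 / 2 < α)
    (hε : 0 < ε) (A : DelayedVCAlgorithmRes) :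
    ∃ (n : ℕ) (G : SimpleGraph (Fin n)),
      1 ≤ vcNum G ∧ resCost A α n G > (2 - ε) * (vcNum G : ℝ) := by
  obtain ⟨M, hM⟩ := exists_nat_gt (4 / ε)
  have hM1 : 1 ≤ M := by
    have : (0 : ℝ) < M := (div_pos four_pos hε).trans hM
    exact_mod_cast this
  obtain ⟨b, hb⟩ := A.exists_parity_card_le M
  refine ⟨_, _, A.one_le_vcNum_hardInstance M b hM1,
    two_sub_mul_lt_of_two_mul_sub_one_le hε (Nat.cast_nonneg _)
      (A.two_mul_vcNum_sub_one_le_resCost_hardInstance M b hα.le hb) ?_⟩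
  have : 2 / ε < M / 2 := by
    rw [div_lt_div_iff₀ hε two_pos]
    rw [div_lt_iff₀ hε] at hM
    linarith
  exact this.trans_le (A.half_le_resCost_hardInstance M b hα.le)
end
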